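/- Let T be a real with T > 1 and let V be an optimal computer. Then Ω_V(T) diverges to ∞; that is, the family (2^{−|p|/T})_{p ∈ Dom V} is not summable. -/

import Mathlib

open Filter Topology ENNReal

/-- A computer: a partial recursive function from finite binary strings to finite
binary strings whose domain is prefix-free. -/
structure Computer where
  f : List Bool →. List Bool
  partrec : Partrec f
  prefixFree : ∀ p q, p ∈ f.Dom → q ∈ f.Dom → p <+: q → p = q

/-- A computer `U` is optimal. -/
def Computer.Optimal (U : Computer) : Prop :=
  ∀ C : Computer, ∃ d : ℕ, ∀ p ∈ C.f.Dom, ∃ q,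
    U.f q = C.f p ∧ q.length ≤ p.length + d

/-- Program-size complexity `H_C(s)` (∞ if `s` is not a value of `C`). -/
noncomputable def Computer.H (C : Computer) (s : List Bool) : ℝ≥0∞ :=
  sInf {x : ℝ≥0∞ | ∃ p, C.f p = Part.some s ∧ x = (p.length : ℝ≥0∞)}

/-- The first `n` bits of the base-two expansion of `α - ⌊α⌋` (with infinitely many
zeros); the `i`-th bit (1 ≤ i ≤ n) is `⌊2^i·α⌋ mod 2`. -/
noncomputable def restr (α : ℝ) (n : ℕ) : List Bool :=
  (List.range n).map fun i => decide (⌊(2 : ℝ) ^ (i + 1) * α⌋ % 2 = 1)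

/-- A real is r.e. if some computable, increasing sequence of rationals converges to it. -/
def REReal (α : ℝ) : Prop :=
  ∃ a : ℕ → ℚ, Computable a ∧ StrictMono a ∧
    Tendsto (fun n => (a n : ℝ)) atTop (𝓝 α)

/-- A real `T` is computable. -/
def ComputableReal (T : ℝ) : Prop :=
  ∃ g : ℕ → ℚ, Computable g ∧ ∀ n : ℕ, |T - (g n : ℝ)| < 2 ^ (-(n : ℤ))

/-- An increasing sequence of reals is `T`-convergent if `Σ (a_{n+1} - a_n)^T < ∞`. -/
def TConvergentSeq (T : ℝ) (a : ℕ → ℝ) : Prop :=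
  Summable fun n => (a (n + 1) - a n) ^ T

/-- An r.e. real `α` is `T`-convergent if some `T`-convergent computable, increasing
sequence of rationals converges to `α`. -/
def RETConvergent (T : ℝ) (α : ℝ) : Prop :=
  ∃ a : ℕ → ℚ, Computable a ∧ StrictMono a ∧
    TConvergentSeq T (fun n => (a n : ℝ)) ∧
    Tendsto (fun n => (a n : ℝ)) atTop (𝓝 α)

/-- A sequence of reals is computable. -/
def ComputableRealSeq (a : ℕ → ℝ) : Prop :=
  ∃ F : ℕ × ℕ → ℚ, Computable F ∧ ∀ n m : ℕ, |a n - (F (n, m) : ℝ)| < 2 ^ (-(m : ℤ))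

/-- `α` dominates `β`. -/
def Dominates (α β : ℝ) : Prop :=
  ∃ a b : ℕ → ℚ, ∃ c : ℕ, Computable a ∧ Computable b ∧
    StrictMono a ∧ StrictMono b ∧
    Tendsto (fun n => (a n : ℝ)) atTop (𝓝 α) ∧
    Tendsto (fun n => (b n : ℝ)) atTop (𝓝 β) ∧
    0 < c ∧ ∀ n : ℕ, (c : ℝ) * (α - a n) ≥ β - b n

/-- An r.e. real is `Ω(T)`-like if it dominates all r.e. `T`-convergent reals. -/
def OmegaTLike (T : ℝ) (α : ℝ) : Prop :=
  ∀ β : ℝ, RETConvergent T β → Dominates α β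

/-- The generalized halting probability `Ω_V(T)`. -/
noncomputable def OmegaT (V : Computer) (T : ℝ) : ℝ :=
  ∑' p : {p : List Bool // p ∈ V.f.Dom}, (2 : ℝ) ^ (-((p.1.length : ℝ) / T))

/-- `α` is weakly Chaitin `T`-random with respect to `U`. -/
def WeaklyChaitinTRandom (U : Computer) (T : ℝ) (α : ℝ) : Prop :=
  ∃ c : ℕ, ∀ n : ℕ, 0 < n → ENNReal.ofReal (T * n - c) ≤ U.H (restr α n)

/-- `α` is `T`-compressible with respect to `U`: `limsup H(α↾n)/n ≤ T`. -/
def TCompressible (U : Computer) (T : ℝ) (α : ℝ) : Prop :=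
  Filter.limsup (fun n : ℕ => U.H (restr α n) / (n : ℝ≥0∞)) atTop ≤ ENNReal.ofReal T

/-- The lower algorithmic dimension of `α` w.r.t. `U`: `liminf H(α↾n)/n`. -/
noncomputable def dimA (U : Computer) (α : ℝ) : ℝ≥0∞ :=
  Filter.liminf (fun n : ℕ => U.H (restr α n) / (n : ℝ≥0∞)) atTop

/-- A Martin-Löf `T`-test. -/
def MLTTest (T : ℝ) (C : Set (ℕ × List Bool)) : Prop :=
  REPred (· ∈ C) ∧ ∀ n : ℕ, 0 < n →
    (∑' s : {s : List Bool // (n, s) ∈ C},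
        ENNReal.ofReal ((2 : ℝ) ^ (-(T * (s.1.length : ℝ))))) ≤
      ENNReal.ofReal ((2 : ℝ) ^ (-(n : ℤ)))

/-- `α` is Martin-Löf `T`-random. -/
def MLTRandom (T : ℝ) (α : ℝ) : Prop :=
  ∀ C : Set (ℕ × List Bool), MLTTest T C →
    ∃ n : ℕ, 0 < n ∧ ∀ k : ℕ, 0 < k → (n, restr α k) ∉ C

/-- A lower-computable semi-measure. -/
def LowerSemiMeasure (r : List Bool → ℝ) : Prop :=
  (∀ s, 0 ≤ r s ∧ r s ≤ 1) ∧
  (∑' s : List Bool, ENNReal.ofReal (r s)) ≤ 1 ∧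
  REPred (fun x : ℚ × List Bool => (x.1 : ℝ) < r x.2)

/-- A universal probability. -/
def UniversalProb (m : List Bool → ℝ) : Prop :=
  LowerSemiMeasure m ∧
  ∀ r, LowerSemiMeasure r → ∃ c : ℕ, 0 < c ∧ ∀ s, r s ≤ (c : ℝ) * m s

/-- A computable, increasing sequence of rationals converging to `α` is `T`-universal. -/
def TUniversalSeq (T : ℝ) (a : ℕ → ℚ) (α : ℝ) : Prop :=
  ∀ (b : ℕ → ℚ) (β : ℝ), Computable b → StrictMono b →
    TConvergentSeq T (fun n => (b n : ℝ)) →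
    Tendsto (fun n => (b n : ℝ)) atTop (𝓝 β) →
    ∃ c : ℕ, 0 < c ∧ ∀ n : ℕ, (c : ℝ) * (α - a n) ≥ β - b n

/-- A computable, increasing sequence of rationals converging to `α` is universal. -/
def UniversalSeq (a : ℕ → ℚ) (α : ℝ) : Prop :=
  ∀ (b : ℕ → ℚ) (β : ℝ), Computable b → StrictMono b →
    Tendsto (fun n => (b n : ℝ)) atTop (𝓝 β) →
    ∃ c : ℕ, 0 < c ∧ ∀ n : ℕ, (c : ℝ) * (α - a n) ≥ β - b n

/-- The function `s ↦ 2^{-H_V(s)}`, with `2^{-∞}` interpreted as `0`. -/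
noncomputable def twoPowNegH (V : Computer) (s : List Bool) : ℝ :=
  if V.H s = ⊤ then 0 else (2 : ℝ) ^ (-(V.H s).toReal)

def lead (p : List Bool) : ℕ := p.foldr (fun b n => if b then n + 1 else 0) 0

lemma lead_cons (b : Bool) (l : List Bool) :
    lead (b :: l) = if b then lead l + 1 else 0 := rfl

lemma lead_replicate (m : ℕ) (s : List Bool) :
    lead (List.replicate m true ++ false :: s) = m := by
  induction m with
  | zero => simp [lead_cons]
  | succ k ih => simpa [List.replicate_succ, lead_cons] using ih

lemma lead_append (l r : List Bool) (h : lead l < l.length) :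
    lead (l ++ r) = lead l := by
  induction l with
  | nil => simp at h
  | cons b l ih =>
    cases b with
    | false => simp [lead_cons]
    | true =>
      simp only [lead_cons, if_true, List.cons_append, List.length_cons] at *
      rw [ih (by omega)]

def goodStr (p : List Bool) : Prop := p.length = lead p + 1 + 2 ^ lead p

instance : DecidablePred goodStr := fun p => Nat.decEq _ _

lemma primrec_lead : Primrec lead := by
  have : Primrec₂ (fun (_ : List Bool) (x : Bool × ℕ) =>
      if x.1 then x.2 + 1 else 0) := by
    have := Primrec.cond (α := List Bool × (Bool × ℕ)) (Primrec.fst.comp Primrec.snd)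
      (Primrec.succ.comp (Primrec.snd.comp Primrec.snd)) (Primrec.const 0)
    exact Primrec₂.mk (this.of_eq (by rintro ⟨_, b, n⟩; cases b <;> rfl))
  exact (Primrec.list_foldr Primrec.id (Primrec.const 0) this)

lemma primrec_good :
    Primrec (fun p : List Bool => if goodStr p then (some p : Option (List Bool)) else none) := by
  have hpow : Primrec₂ (fun a b : ℕ => a ^ b) := Primrec₂.unpaired'.mp Nat.Primrec.pow
  have hrhs : Primrec (fun p : List Bool => lead p + 1 + 2 ^ lead p) :=
    Primrec.nat_add.comp (Primrec.succ.comp primrec_lead)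
      (hpow.comp (Primrec.const 2) primrec_lead)
  exact Primrec.ite (PrimrecRel.comp Primrec.eq Primrec.list_length hrhs)
    (Primrec.option_some.comp Primrec.id) (Primrec.const none)



noncomputable def myC : Computer where
  f := fun p => Part.ofOption (if goodStr p then some p else none)
  partrec := Computable.ofOption primrec_good.to_comp
  prefixFree := by
    intro p q hp hq hpre
    have hgp : goodStr p := by
      by_contra h
      simp [h, Part.ofOption] at hp
    have hgq : goodStr q := by
      by_contra h
      simp [h, Part.ofOption] at hq
    obtain ⟨r, rfl⟩ := hpre
    have hlt : lead p < p.length := by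
      have h2 : 0 < 2 ^ lead p := Nat.pow_pos (by norm_num)
      unfold goodStr at hgp; omega
    have hl : lead (p ++ r) = lead p := lead_append p r hlt
    have : (p ++ r).length = p.length := by
      unfold goodStr at hgp hgq; rw [hl] at hgq; omega
    simp only [List.length_append] at this
    have : r = [] := List.eq_nil_of_length_eq_zero (by omega)
    simp [this]

lemma myC_dom {p : List Bool} (h : goodStr p) : p ∈ myC.f.Dom := by
  simp [myC, h, Part.ofOption]

lemma myC_eval {p : List Bool} (h : goodStr p) : myC.f p = Part.some p := by
  simp [myC, h, Part.ofOption]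

lemma good_mem (m : ℕ) (s : List Bool) (hs : s.length = 2 ^ m) :
    goodStr (List.replicate m true ++ false :: s) := by
  unfold goodStr
  rw [lead_replicate]
  simp [hs]; omega

lemma two_mul_le_two_pow' (i : ℕ) (hi : 2 ≤ i) : 2 * i ≤ 2 ^ i := by
  induction i with
  | zero => omega
  | succ k ih =>
    rcases Nat.lt_or_ge k 2 with h | h
    · interval_cases k <;> simp_all <;> omega
    · have := ih (by omega)
      have h2 : (2:ℕ) ≤ 2 ^ k := le_trans (by omega) this
      rw [pow_succ]; omega

/-- For `T > 1`, `Ω_V(T)` diverges: the family `(2^{-|p|/T})_{p ∈ Dom V}` is not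
summable. -/
theorem omegaT_not_summable_of_one_lt (T : ℝ) (hT : 1 < T)
    (V : Computer) (hV : V.Optimal) :
    ¬ Summable (fun p : {p : List Bool // p ∈ V.f.Dom} =>
        (2 : ℝ) ^ (-((p.1.length : ℝ) / T))) := by
  intro hsum
  set F : {p : List Bool // p ∈ V.f.Dom} → ℝ :=
    (fun p : {p : List Bool // p ∈ V.f.Dom} => (2 : ℝ) ^ (-((p.1.length : ℝ) / T))) with hF
  have hT0 : (0:ℝ) < T := lt_trans one_pos hT
  have hFpos : ∀ p, 0 < F p := fun p => Real.rpow_pos_of_pos two_pos _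
  set B : ℝ := ∑' p, F p with hB
  obtain ⟨d, hd⟩ := hV myC
  have key : ∀ m : ℕ, ∃ φ : (Fin (2 ^ m) → Bool) → {p : List Bool // p ∈ V.f.Dom},
      Function.Injective φ ∧ ∀ v, (φ v).1.length ≤ 2 ^ m + m + 1 + d := by
    intro m
    have hmem : ∀ v : Fin (2 ^ m) → Bool,
        (List.replicate m true ++ false :: List.ofFn v) ∈ myC.f.Dom := fun v =>
      myC_dom (good_mem m _ (List.length_ofFn (f := v)))
    choose q hq1 hq2 using fun v => hd _ (hmem v)
    have hq1' : ∀ v, V.f (q v) = Part.some (List.replicate m true ++ false :: List.ofFn v) := by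
      intro v
      rw [hq1 v, myC_eval (good_mem m _ (List.length_ofFn (f := v)))]
    have hdom : ∀ v, q v ∈ V.f.Dom := by
      intro v
      rw [PFun.mem_dom]
      exact ⟨_, by rw [hq1' v]; exact Part.mem_some _⟩
    refine ⟨fun v => ⟨q v, hdom v⟩, ?_, ?_⟩
    · intro v w h
      have hqq : q v = q w := congrArg Subtype.val h
      have h1 := hq1' v
      rw [hqq, hq1' w] at h1
      have h2 : (List.replicate m true ++ false :: List.ofFn w) =
          (List.replicate m true ++ false :: List.ofFn v) := Part.some_inj.mp h1
      have h3 : List.ofFn w = List.ofFn v := by simpa using h2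
      exact (List.ofFn_injective h3).symm
    · intro v
      show (q v).length ≤ 2 ^ m + m + 1 + d
      have := hq2 v
      simp only [List.length_append, List.length_replicate, List.length_cons,
        List.length_ofFn] at this
      omega
  have hBnd : ∀ m : ℕ, (2:ℝ) ^ ((2 ^ m : ℕ) : ℝ) *
      (2:ℝ) ^ (-(((2 ^ m + m + 1 + d : ℕ) : ℝ)) / T) ≤ B := by
    intro m
    obtain ⟨φ, hinj, hlen⟩ := key m
    have hsub : ∑ v : (Fin (2 ^ m) → Bool), F (φ v) ≤ B := by
      rw [← Finset.sum_image (g := φ) (f := F)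
        (fun a _ b _ h => hinj h)]
      exact Summable.sum_le_tsum _ (fun _ _ => (hFpos _).le) hsum
    have hterm : ∀ v : (Fin (2 ^ m) → Bool),
        (2:ℝ) ^ (-(((2 ^ m + m + 1 + d : ℕ) : ℝ)) / T) ≤ F (φ v) := by
      intro v
      apply Real.rpow_le_rpow_of_exponent_le one_le_two
      have hlv : ((φ v).1.length : ℝ) ≤ ((2 ^ m + m + 1 + d : ℕ) : ℝ) := by
        exact_mod_cast hlen v
      rw [neg_div]
      apply neg_le_neg
      gcongr
    have hcard : ((Finset.univ : Finset (Fin (2 ^ m) → Bool)).card : ℝ) =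
        (2:ℝ) ^ ((2 ^ m : ℕ) : ℝ) := by
      rw [Finset.card_univ, Fintype.card_fun, Fintype.card_bool, Fintype.card_fin,
        Real.rpow_natCast]
      push_cast
      ring
    calc (2:ℝ) ^ ((2 ^ m : ℕ) : ℝ) * (2:ℝ) ^ (-(((2 ^ m + m + 1 + d : ℕ) : ℝ)) / T)
        = ((Finset.univ : Finset (Fin (2 ^ m) → Bool)).card : ℝ) *
          (2:ℝ) ^ (-(((2 ^ m + m + 1 + d : ℕ) : ℝ)) / T) := by rw [hcard]
      _ ≤ ∑ v : (Fin (2 ^ m) → Bool), F (φ v) := by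
          rw [← nsmul_eq_mul]
          exact Finset.card_nsmul_le_sum _ _ _ (fun v _ => hterm v)
      _ ≤ B := hsub
  -- now derive the contradiction
  set c : ℝ := 1 - 1 / T with hc
  have hcpos : 0 < c := by
    have : 1 / T < 1 := by
      rw [div_lt_one hT0]; exact hT
    rw [hc]; linarith
  obtain ⟨n, hn⟩ := exists_nat_gt B
  obtain ⟨j, hj⟩ := exists_nat_gt (1 / c)
  have hj2 : (1:ℝ) ≤ c * 2 ^ j := by
    have h1 : (j:ℝ) ≤ 2 ^ j := by exact_mod_cast (Nat.lt_two_pow_self (n := j)).le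
    have := (div_lt_iff₀ hcpos).mp (lt_of_lt_of_le hj h1)
    linarith [mul_comm c ((2:ℝ)^j)]
  set i : ℕ := n + j + 1 + d + 2 with hi
  set m : ℕ := j + i with hm
  clear_value F B c i m
  -- exponent estimate
  have hnat : 2 * i ≤ 2 ^ i := two_mul_le_two_pow' i (by omega)
  have hexp : (n:ℝ) ≤ ((2 ^ m : ℕ) : ℝ) - ((2 ^ m + m + 1 + d : ℕ) : ℝ) / T := by
    have e1 : ((2 ^ m + m + 1 + d : ℕ) : ℝ) / T ≤ ((2 ^ m : ℕ) : ℝ) / T + ((m + 1 + d : ℕ) : ℝ) := by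
      have : ((2 ^ m + m + 1 + d : ℕ) : ℝ) = ((2 ^ m : ℕ) : ℝ) + ((m + 1 + d : ℕ) : ℝ) := by
        push_cast; ring
      rw [this, add_div]
      have : ((m + 1 + d : ℕ) : ℝ) / T ≤ ((m + 1 + d : ℕ) : ℝ) := by
        apply div_le_self (by positivity) (le_of_lt hT)
      linarith
    have e2 : ((2 ^ m : ℕ) : ℝ) - ((2 ^ m : ℕ) : ℝ) / T = c * ((2 ^ m : ℕ) : ℝ) := by
      rw [hc]; field_simp
    have e3 : (2:ℝ) ^ (i:ℕ) ≤ c * ((2 ^ m : ℕ) : ℝ) := by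
      have : ((2 ^ m : ℕ) : ℝ) = (2:ℝ) ^ j * (2:ℝ) ^ i := by
        rw [hm]; push_cast [pow_add]; ring
      rw [this, ← mul_assoc]
      have h2i : (0:ℝ) ≤ (2:ℝ) ^ (i:ℕ) := by positivity
      nlinarith
    have e4 : (n:ℝ) + ((m + 1 + d : ℕ) : ℝ) ≤ (2:ℝ) ^ (i:ℕ) := by
      have : (n + (m + 1 + d) : ℕ) ≤ 2 ^ i := by
        calc n + (m + 1 + d) ≤ 2 * i := by omega
          _ ≤ 2 ^ i := hnat
      calc (n:ℝ) + ((m + 1 + d : ℕ) : ℝ) = ((n + (m + 1 + d) : ℕ) : ℝ) := by push_cast; ring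
        _ ≤ ((2 ^ i : ℕ) : ℝ) := by exact_mod_cast this
        _ = (2:ℝ) ^ (i:ℕ) := by push_cast; ring
    linarith
  -- conclude
  have hfin : (n:ℝ) < (2:ℝ) ^ ((n:ℕ) : ℝ) := by
    rw [Real.rpow_natCast]
    exact_mod_cast Nat.lt_two_pow_self (n := n)
  have hmain := hBnd m
  rw [← Real.rpow_add two_pos] at hmain
  have hmono : (2:ℝ) ^ ((n:ℕ) : ℝ) ≤
      (2:ℝ) ^ (((2 ^ m : ℕ) : ℝ) + -(((2 ^ m + m + 1 + d : ℕ) : ℝ)) / T) := by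
    apply Real.rpow_le_rpow_of_exponent_le one_le_two
    rw [neg_div]
    linarith
  linarith
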